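/- Let A be an a×a positive definite Hermitian matrix and B an a×b matrix (a > b) with B^H B = I_b. Then tr((B^H A B)⁻¹) ≤ tr(B^H A⁻¹ B). -/

import Mathlib

/-!
Conjugating the positive semidefinite block matrix `[A, 1; 1, A⁻¹]` by `diag(B, B)` gives
`[BᴴAB, 1; 1, BᴴA⁻¹B]` because `BᴴB = 1`; its Schur complement `BᴴA⁻¹B - (BᴴAB)⁻¹` is therefore
positive semidefinite, and so has nonnegative trace.
-/

open Matrix ComplexOrder

namespace Matrix

variable {n m 𝕜 : Type*} [Fintype n] [Fintype m] [DecidableEq m] [RCLike 𝕜]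

lemma mulVec_injective_of_conjTranspose_mul_self_eq_one {B : Matrix n m 𝕜} (hB : Bᴴ * B = 1) :
    Function.Injective B.mulVec :=
  Function.LeftInverse.injective (g := Bᴴ.mulVec) fun x => by
    rw [mulVec_mulVec, hB, one_mulVec]

variable [DecidableEq n]

lemma PosDef.posSemidef_fromBlocks_one_inv {A : Matrix n n 𝕜} (hA : A.PosDef) :
    (fromBlocks A 1 1 A⁻¹).PosSemidef := by
  have : Invertible A := hA.isUnit.invertible
  simpa using (hA.fromBlocks₁₁ 1 A⁻¹).mpr (by simpa using PosSemidef.zero)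

lemma PosDef.posSemidef_sub_inv_conjTranspose_mul_mul {A : Matrix n n 𝕜} (hA : A.PosDef)
    {B : Matrix n m 𝕜} (hB : Bᴴ * B = 1) :
    (Bᴴ * A⁻¹ * B - (Bᴴ * A * B)⁻¹).PosSemidef := by
  have hM : (Bᴴ * A * B).PosDef :=
    hA.conjTranspose_mul_mul_same (mulVec_injective_of_conjTranspose_mul_self_eq_one hB)
  have : Invertible (Bᴴ * A * B) := hM.isUnit.invertible
  have hconj : (fromBlocks B 0 0 B)ᴴ * fromBlocks A 1 1 A⁻¹ * fromBlocks B 0 0 B =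
      fromBlocks (Bᴴ * A * B) 1 1ᴴ (Bᴴ * A⁻¹ * B) := by
    simp [fromBlocks_conjTranspose, fromBlocks_multiply, Matrix.mul_assoc, hB]
  have hblock := hA.posSemidef_fromBlocks_one_inv.conjTranspose_mul_mul_same (fromBlocks B 0 0 B)
  rw [hconj] at hblock
  simpa using (hM.fromBlocks₁₁ 1 _).mp hblock

end Matrix

theorem stmt5_general {a b : ℕ} (A : Matrix (Fin a) (Fin a) ℂ) (hA : A.PosDef)
    (B : Matrix (Fin a) (Fin b) ℂ) (hB : Bᴴ * B = 1) :
    (((Bᴴ * A * B)⁻¹).trace).re ≤ ((Bᴴ * A⁻¹ * B).trace).re := by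
  have h := (Complex.nonneg_iff.mp (hA.posSemidef_sub_inv_conjTranspose_mul_mul hB).trace_nonneg).1
  rw [trace_sub, Complex.sub_re] at h
  linarith

theorem stmt5 {a b : ℕ} (hab : b < a) (A : Matrix (Fin a) (Fin a) ℂ) (hA : A.PosDef)
    (B : Matrix (Fin a) (Fin b) ℂ) (hB : Bᴴ * B = 1) :
    (((Bᴴ * A * B)⁻¹).trace).re ≤ ((Bᴴ * A⁻¹ * B).trace).re :=
  stmt5_general A hA B hB
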